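/- Let G be a finite simple graph whose chromatic number equals its clique number, χ(G) = ω(G). Then for every integer d ≥ 0, χ^d(G ⊠ K_{d+1}) = χ(G). In particular this holds for all perfect graphs G. -/

import Mathlib

open SimpleGraph Finset Matrix

namespace ImproperPaper

variable {V W : Type*}

/-- The strong product of two simple graphs. -/
def strongProd (G : SimpleGraph V) (H : SimpleGraph W) : SimpleGraph (V × W) where
  Adj p q := (p.1 = q.1 ∧ H.Adj p.2 q.2) ∨ (G.Adj p.1 q.1 ∧ p.2 = q.2) ∨
    (G.Adj p.1 q.1 ∧ H.Adj p.2 q.2)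
  symm := by
    constructor
    rintro ⟨a, b⟩ ⟨x, y⟩ (⟨h1, h2⟩ | ⟨h1, h2⟩ | ⟨h1, h2⟩)
    · exact Or.inl ⟨h1.symm, h2.symm⟩
    · exact Or.inr (Or.inl ⟨h1.symm, h2.symm⟩)
    · exact Or.inr (Or.inr ⟨h1.symm, h2.symm⟩)
  loopless := by
    constructor
    rintro ⟨a, b⟩ (⟨h1, h2⟩ | ⟨h1, h2⟩ | ⟨h1, h2⟩)
    · exact H.irrefl h2
    · exact G.irrefl h1
    · exact G.irrefl h1

/-- The lexicographical product of two simple graphs. -/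
def lexProd (G : SimpleGraph V) (H : SimpleGraph W) : SimpleGraph (V × W) where
  Adj p q := G.Adj p.1 q.1 ∨ (p.1 = q.1 ∧ H.Adj p.2 q.2)
  symm := by
    constructor
    rintro ⟨a, b⟩ ⟨x, y⟩ (h | ⟨h1, h2⟩)
    · exact Or.inl h.symm
    · exact Or.inr ⟨h1.symm, h2.symm⟩
  loopless := by
    constructor
    rintro ⟨a, b⟩ (h | ⟨h1, h2⟩)
    · exact G.irrefl h
    · exact H.irrefl h2

instance {G : SimpleGraph V} {H : SimpleGraph W} [DecidableEq V] [DecidableEq W]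
    [DecidableRel G.Adj] [DecidableRel H.Adj] : DecidableRel (strongProd G H).Adj := fun p q =>
  show Decidable ((p.1 = q.1 ∧ H.Adj p.2 q.2) ∨ (G.Adj p.1 q.1 ∧ p.2 = q.2) ∨
    (G.Adj p.1 q.1 ∧ H.Adj p.2 q.2)) from inferInstance

/-- A colouring is `d`-improper if every colour class induces a subgraph of
maximum degree at most `d`. -/
def IsImproperColoring (G : SimpleGraph V) (d : ℕ) {α : Type*} (c : V → α) : Prop :=
  ∀ v : V, ({w | G.Adj v w ∧ c w = c v} : Set V).ncard ≤ d

/-- The `d`-improper chromatic number. -/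
noncomputable def improperChromaticNumber (G : SimpleGraph V) (d : ℕ) : ℕ :=
  sInf {n | ∃ c : V → Fin n, IsImproperColoring G d c}

/-- A colouring is `t`-clustered if every monochromatic connected component has at
most `t` vertices. -/
def IsClusteredColoring (G : SimpleGraph V) (t : ℕ) {α : Type*} (c : V → α) : Prop :=
  ∀ v : V,
    ({w | Relation.ReflTransGen (fun a b => G.Adj a b ∧ c a = c b) v w} : Set V).ncard ≤ t

/-- The `t`-clustered chromatic number. -/
noncomputable def clusteredChromaticNumber (G : SimpleGraph V) (t : ℕ) : ℕ :=
  sInf {n | ∃ c : V → Fin n, IsClusteredColoring G t c}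

/-- The chromatic number: least `n` admitting a proper colouring with `n` colours. -/
noncomputable def chromNum (G : SimpleGraph V) : ℕ :=
  sInf {n | ∃ c : V → Fin n, ∀ u v, G.Adj u v → c u ≠ c v}

/-- The `b`-fold `d`-improper chromatic number: least number of colours in an assignment
of `b` colours to each vertex such that, for every colour `x`, the set of vertices whose
colour set contains `x` induces a subgraph of maximum degree at most `d`. -/
noncomputable def bFoldImproperChromaticNumber (G : SimpleGraph V) (b d : ℕ) : ℕ :=
  sInf {n | ∃ c : V → Finset (Fin n), (∀ v, (c v).card = b) ∧
    ∀ v : V, ∀ x ∈ c v, ({w | G.Adj v w ∧ x ∈ c w} : Set V).ncard ≤ d}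

/-- The (proper) `b`-fold chromatic number. -/
noncomputable def bFoldChromaticNumber (G : SimpleGraph V) (b : ℕ) : ℕ :=
  bFoldImproperChromaticNumber G b 0

/-- The `b`-fold `t`-clustered chromatic number. -/
noncomputable def bFoldClusteredChromaticNumber (G : SimpleGraph V) (b t : ℕ) : ℕ :=
  sInf {n | ∃ c : V → Finset (Fin n), (∀ v, (c v).card = b) ∧
    ∀ x : Fin n, ∀ v : V, x ∈ c v →
      ({w | Relation.ReflTransGen (fun a b' => G.Adj a b' ∧ x ∈ c a ∧ x ∈ c b') v w} :
        Set V).ncard ≤ t}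

/-- The fractional chromatic number `χ_f(G) = inf { χ_b(G)/b : b ≥ 1 }`. -/
noncomputable def fracChromaticNumber (G : SimpleGraph V) : ℝ :=
  sInf {x : ℝ | ∃ b : ℕ, 0 < b ∧ x = (bFoldChromaticNumber G b : ℝ) / b}

/-- The fractional `d`-improper chromatic number. -/
noncomputable def fracImproperChromaticNumber (G : SimpleGraph V) (d : ℕ) : ℝ :=
  sInf {x : ℝ | ∃ b : ℕ, 0 < b ∧ x = (bFoldImproperChromaticNumber G b d : ℝ) / b}

/-- The fractional `t`-clustered chromatic number. -/
noncomputable def fracClusteredChromaticNumber (G : SimpleGraph V) (t : ℕ) : ℝ :=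
  sInf {x : ℝ | ∃ b : ℕ, 0 < b ∧ x = (bFoldClusteredChromaticNumber G b t : ℝ) / b}

/-- `lam` lists the eigenvalues of the Hermitian matrix `A` (with multiplicity) in
non-increasing order. -/
def IsEigList {n : ℕ} {A : Matrix (Fin n) (Fin n) ℝ} (hA : A.IsHermitian)
    (lam : Fin n → ℝ) : Prop :=
  Antitone lam ∧ ∃ σ : Equiv.Perm (Fin n), lam = hA.eigenvalues ∘ σ

/-- The largest size of a vertex subset inducing a subgraph of maximum degree at most `d`. -/
noncomputable def maxImproperIndep (G : SimpleGraph V) (d : ℕ) : ℕ :=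
  sSup {k | ∃ s : Set V, s.ncard = k ∧ ∀ v ∈ s, ({w | w ∈ s ∧ G.Adj v w} : Set V).ncard ≤ d}

end ImproperPaper

/-!
Lifting a proper colouring of `G` along the projection `G ⊠ K_{d+1} → G` gives a `d`-improper
colouring: a colour class meets only copies `{v} × K_{d+1}`, where every vertex has `d`
neighbours. Conversely, a maximum clique `S` of `G` blows up to the clique `S × K_{d+1}` with
`(d+1)·ω(G)` vertices, and a colour class of a `d`-improper colouring contains at most `d+1`
vertices of any clique, so at least `ω(G) = χ(G)` colours are needed.
-/

open ImproperPaper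

namespace SimpleGraph

variable {V W : Type*} {G : SimpleGraph V} {H : SimpleGraph W}

theorem IsClique.strongProd {s : Set V} {t : Set W} (hs : G.IsClique s) (ht : H.IsClique t) :
    (strongProd G H).IsClique (s ×ˢ t) := by
  rintro ⟨u, i⟩ ⟨hu, hi⟩ ⟨v, j⟩ ⟨hv, hj⟩ hne
  by_cases huv : u = v
  · subst huv
    exact Or.inl ⟨rfl, ht hi hj fun hij => hne (Prod.ext rfl hij)⟩
  · by_cases hij : i = j
    · exact Or.inr (Or.inl ⟨hs hu hv huv, hij⟩)
    · exact Or.inr (Or.inr ⟨hs hu hv huv, ht hi hj hij⟩)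

theorem IsNClique.strongProd {m n : ℕ} {s : Finset V} {t : Finset W} (hs : G.IsNClique m s)
    (ht : H.IsNClique n t) : (strongProd G H).IsNClique (m * n) (s ×ˢ t) :=
  ⟨by rw [Finset.coe_product]; exact hs.isClique.strongProd ht.isClique,
    by rw [Finset.card_product, hs.card_eq, ht.card_eq]⟩

end SimpleGraph

namespace ImproperPaper

variable {V W α : Type*} {G : SimpleGraph V} {H : SimpleGraph W} {d : ℕ}

theorem exists_coloring_chromNum [Finite V] (G : SimpleGraph V) :
    ∃ c : V → Fin (chromNum G), ∀ u v, G.Adj u v → c u ≠ c v := by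
  obtain ⟨n, ⟨e⟩⟩ := Finite.exists_equiv_fin V
  exact Nat.sInf_mem (s := {n | ∃ c : V → Fin n, ∀ u v, G.Adj u v → c u ≠ c v})
    ⟨n, e, fun u v huv h => G.ne_of_adj huv (e.injective h)⟩

theorem exists_isImproperColoring_improperChromaticNumber [Finite V] (G : SimpleGraph V)
    (d : ℕ) : ∃ c : V → Fin (improperChromaticNumber G d), IsImproperColoring G d c := by
  obtain ⟨n, ⟨e⟩⟩ := Finite.exists_equiv_fin V
  refine Nat.sInf_mem (s := {n | ∃ c : V → Fin n, IsImproperColoring G d c}) ⟨n, e, fun v => ?_⟩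
  have : {w | G.Adj v w ∧ e w = e v} = ∅ :=
    Set.eq_empty_of_forall_notMem fun w ⟨hvw, hw⟩ => G.ne_of_adj hvw (e.injective hw).symm
  rw [this, Set.ncard_empty]
  exact d.zero_le

theorem isImproperColoring_strongProd_comp_fst {c : V → α}
    (hc : ∀ u v, G.Adj u v → c u ≠ c v) (hH : ∀ w, (H.neighborSet w).ncard ≤ d) :
    IsImproperColoring (strongProd G H) d (c ∘ Prod.fst) := by
  intro p
  have : {q | (strongProd G H).Adj p q ∧ (c ∘ Prod.fst) q = (c ∘ Prod.fst) p} =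
      Prod.mk p.1 '' H.neighborSet p.2 := by
    ext ⟨u, i⟩
    constructor
    · rintro ⟨⟨rfl, hi⟩ | ⟨hu, -⟩ | ⟨hu, -⟩, hcol⟩
      · exact ⟨i, hi, rfl⟩
      all_goals exact absurd hcol (hc _ _ hu).symm
    · rintro ⟨j, hj, hju⟩
      obtain ⟨rfl, rfl⟩ := Prod.mk.inj hju
      exact ⟨Or.inl ⟨rfl, hj⟩, rfl⟩
  rw [this, Set.ncard_image_of_injective _ (Prod.mk_right_injective p.1)]
  exact hH p.2

theorem improperChromaticNumber_strongProd_le [Finite V]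
    (hH : ∀ w, (H.neighborSet w).ncard ≤ d) :
    improperChromaticNumber (strongProd G H) d ≤ chromNum G := by
  obtain ⟨c, hc⟩ := exists_coloring_chromNum G
  exact Nat.sInf_le ⟨_, isImproperColoring_strongProd_comp_fst hc hH⟩

theorem IsImproperColoring.card_filter_le_of_isClique [Finite V] [DecidableEq α] {c : V → α}
    (hc : IsImproperColoring G d c) {s : Finset V} (hs : G.IsClique (s : Set V)) (a : α) :
    #{v ∈ s | c v = a} ≤ d + 1 := by
  classical
  rcases Finset.eq_empty_or_nonempty {v ∈ s | c v = a} with h | ⟨p, hp⟩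
  · simp [h]
  have hsub : (({v ∈ s | c v = a}.erase p : Finset V) : Set V) ⊆
      {w | G.Adj p w ∧ c w = c p} := by
    intro q hq
    rw [Finset.mem_coe, Finset.mem_erase, Finset.mem_filter] at hq
    rw [Finset.mem_filter] at hp
    exact ⟨hs hp.1 hq.2.1 hq.1.symm, hq.2.2.trans hp.2.symm⟩
  have := (Set.ncard_le_ncard hsub).trans (hc p)
  rw [Set.ncard_coe_finset, Finset.card_erase_of_mem hp] at this
  omega

theorem IsImproperColoring.card_le_of_isClique [Finite V] [Fintype α] {c : V → α}
    (hc : IsImproperColoring G d c) {s : Finset V} (hs : G.IsClique (s : Set V)) :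
    #s ≤ (d + 1) * Fintype.card α := by
  classical
  exact Finset.card_le_mul_card_image_of_maps_to (fun _ _ => Finset.mem_univ _) _
    fun a _ => hc.card_filter_le_of_isClique hs a

theorem card_le_mul_improperChromaticNumber [Finite V] {s : Finset V}
    (hs : G.IsClique (s : Set V)) : #s ≤ (d + 1) * improperChromaticNumber G d := by
  obtain ⟨c, hc⟩ := exists_isImproperColoring_improperChromaticNumber G d
  simpa using hc.card_le_of_isClique hs

end ImproperPaper

open ImproperPaper in

theorem stmt_18 {V : Type*} [Fintype V] (G : SimpleGraph V) (d : ℕ)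
    (hperf : chromNum G = G.cliqueNum) :
    improperChromaticNumber (strongProd G (⊤ : SimpleGraph (Fin (d + 1)))) d =
      chromNum G := by
  refine le_antisymm (improperChromaticNumber_strongProd_le fun i => ?_) ?_
  · rw [neighborSet_top, Set.ncard_compl, Set.ncard_singleton, Nat.card_fin, Nat.add_sub_cancel]
  obtain ⟨s, hs⟩ := G.exists_isNClique_cliqueNum
  have hclique := hs.strongProd (⟨IsClique.top _, Finset.card_fin _⟩ :
    (⊤ : SimpleGraph (Fin (d + 1))).IsNClique (d + 1) Finset.univ)
  have hcard := card_le_mul_improperChromaticNumber (d := d) hclique.isClique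
  rw [hclique.card_eq, mul_comm] at hcard
  rw [hperf]
  exact Nat.le_of_mul_le_mul_left hcard d.succ_pos
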